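/- arXiv:2112.07524 — 2 statements merged into one kernel-verified Lean document; each statement's English description precedes it below -/
import Mathlib

section
/- For every graph G, sqrt(p(G)) ≤ etw(G), where p(G) = max over blocks B of G of max(Δ_e(B), tw(B)). -/
open Classical

/-- A finite loopless multigraph: a finite vertex type, a finite edge type, and an
endpoint function assigning to every edge an unordered pair of distinct vertices. -/
structure FinMGraph where
  V : Type
  E : Type
  [fV : Fintype V]
  [fE : Fintype E]
  [dV : DecidableEq V]
  ends : E → Sym2 V
  loopless : ∀ e, ¬ (ends e).IsDiag

attribute [instance] FinMGraph.fV FinMGraph.fE FinMGraph.dV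

namespace FinMGraph

variable (G : FinMGraph)

/-- One-step adjacency inside the vertex set `S` (i.e. in the induced subgraph `G[S]`). -/
def stepIn (S : Set G.V) (a b : G.V) : Prop :=
  a ∈ S ∧ b ∈ S ∧ ∃ e : G.E, G.ends e = s(a, b)

/-- The vertex set of the connected component of `v` in the induced subgraph `G[S]`. -/
def comp (S : Set G.V) (v : G.V) : Set G.V :=
  {w | Relation.ReflTransGen (G.stepIn S) v w}

/-- The number of edges (counted with multiplicity) with exactly one endpoint in `X`. -/
noncomputable def cut (X : Set G.V) : ℕ :=
  Nat.card {e : G.E // ∃ a b, G.ends e = s(a, b) ∧ a ∈ X ∧ b ∉ X}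

/-- For a layout `L` (a linear ordering of the vertices) the set `S_i` of vertices
occurring at position `i` or later. -/
def tail (L : Fin (Fintype.card G.V) ≃ G.V) (i : Fin (Fintype.card G.V)) : Set G.V :=
  {v | i ≤ L.symm v}

/-- The cost `δ^ec(i) = |E_G(C_G(S_i, x_i))|` of position `i` in the layout `L`. -/
noncomputable def cost (L : Fin (Fintype.card G.V) ≃ G.V) (i : Fin (Fintype.card G.V)) : ℕ :=
  G.cut (G.comp (G.tail L i) (L i))

/-- The edge-treewidth of `G`: the minimum over all layouts of the maximum cost. -/
noncomputable def etw : ℕ :=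
  sInf {k | ∃ L : Fin (Fintype.card G.V) ≃ G.V, ∀ i, G.cost L i ≤ k}

end FinMGraph

namespace FinMGraph

variable (G : FinMGraph)

/-- `G` is a forest: every edge is a bridge, i.e. after removing an edge its two
endpoints are no longer connected. -/
def IsForest : Prop :=
  ∀ (e : G.E) (a b : G.V), G.ends e = s(a, b) →
    ¬ Relation.ReflTransGen (fun x y => ∃ f : G.E, f ≠ e ∧ G.ends f = s(x, y)) a b

/-- A cycle of length `k` in `G`, given by an injective cyclic sequence of vertices and an
injective sequence of distinct edges joining consecutive vertices. -/
def IsCycleOn (k : ℕ) (v : ZMod k → G.V) (f : ZMod k → G.E) : Prop :=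
  2 ≤ k ∧ Function.Injective v ∧ Function.Injective f ∧
    ∀ i : ZMod k, G.ends (f i) = s(v i, v (i + 1))

/-- `G` is a cactus: every edge belongs to at most one cycle, i.e. any two cycles
sharing an edge have the same edge set. -/
def IsCactus : Prop :=
  ∀ (k₁ : ℕ) (v₁ : ZMod k₁ → G.V) (f₁ : ZMod k₁ → G.E)
    (k₂ : ℕ) (v₂ : ZMod k₂ → G.V) (f₂ : ZMod k₂ → G.E),
    G.IsCycleOn k₁ v₁ f₁ → G.IsCycleOn k₂ v₂ f₂ →
    (∃ e, e ∈ Set.range f₁ ∧ e ∈ Set.range f₂) → Set.range f₁ = Set.range f₂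

/-- A walk from `a` to `b` using the listed edges, in order. -/
inductive Walk : G.V → G.V → List G.E → Prop
  | nil (v : G.V) : Walk v v []
  | cons {a b c : G.V} {e : G.E} {es : List G.E} :
      G.ends e = s(a, b) → Walk b c es → Walk a c (e :: es)

/-- `H` is a subgraph of `G`. -/
def IsSubgraphOf (H : FinMGraph) : Prop :=
  ∃ (φ : H.V ↪ G.V) (ψ : H.E ↪ G.E), ∀ e, G.ends (ψ e) = (H.ends e).map φ

/-- The edge-degree of `v`: the number of incident edges, counted with multiplicity. -/
noncomputable def edeg (v : G.V) : ℕ :=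
  Nat.card {e : G.E // v ∈ G.ends e}

/-- The vertex-degree of `v`: the number of distinct neighbours of `v`. -/
noncomputable def vdeg (v : G.V) : ℕ :=
  Nat.card {w : G.V // w ≠ v ∧ ∃ e : G.E, G.ends e = s(v, w)}

/-- `H` is obtained from `G` by contracting one edge `e = {x,y}` whose endpoints both
have vertex-degree two and edge-degree two. -/
def ContractStep (H : FinMGraph) : Prop :=
  ∃ (x y : G.V) (e : G.E), G.ends e = s(x, y) ∧
    G.vdeg x = 2 ∧ G.edeg x = 2 ∧ G.vdeg y = 2 ∧ G.edeg y = 2 ∧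
    ∃ (φ : G.V → H.V) (ψ : {f : G.E // f ≠ e} ≃ H.E),
      Function.Surjective φ ∧
      (∀ v w : G.V, φ v = φ w ↔ (v = w ∨ (v = x ∧ w = y) ∨ (v = y ∧ w = x))) ∧
      ∀ f : {f : G.E // f ≠ e}, H.ends (ψ f) = (G.ends f.1).map φ

/-- `H` is a weak topological minor of `G`: `H` is obtained from a subgraph of `G` by
repeatedly contracting edges whose endpoints have vertex-degree two and edge-degree two. -/
def IsWeakTopMinorOf (H G : FinMGraph) : Prop :=
  ∃ S : FinMGraph, S.IsSubgraphOf G ∧ Relation.ReflTransGen FinMGraph.ContractStep S H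

/-- The induced subgraph `G[S]` is connected. -/
def ConnectedOn (S : Set G.V) : Prop :=
  ∀ a ∈ S, ∀ b ∈ S, Relation.ReflTransGen (G.stepIn S) a b

/-- `G` is connected. -/
def Connected : Prop := G.ConnectedOn Set.univ

/-- `G` is biconnected: nonempty and removing any single vertex leaves it connected. -/
def Biconnected : Prop :=
  Nonempty G.V ∧ ∀ v : G.V, G.ConnectedOn {w | w ≠ v}

/-- The minimum cost over layouts whose first vertex is `u`. -/
noncomputable def etwFrom (u : G.V) : ℕ :=
  sInf {k | ∃ L : Fin (Fintype.card G.V) ≃ G.V, (L.symm u : ℕ) = 0 ∧ ∀ i, G.cost L i ≤ k}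

/-- The sub-multigraph of `G` on the same vertex set whose edges are those in `F`. -/
noncomputable def restrictE (F : Set G.E) : FinMGraph :=
  { V := G.V, E := {e : G.E // e ∈ F}, ends := fun e => G.ends e.1,
    loopless := fun e => G.loopless e.1 }

/-- Two edges lie in a common block: they are equal or some cycle contains both. -/
def SameBlock (e f : G.E) : Prop :=
  e = f ∨ ∃ (k : ℕ) (v : ZMod k → G.V) (g : ZMod k → G.E),
    G.IsCycleOn k v g ∧ e ∈ Set.range g ∧ f ∈ Set.range g

/-- The block of `G` containing the edge `e`. -/
noncomputable def blockOf (e : G.E) : FinMGraph :=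
  G.restrictE {f | G.SameBlock e f}

/-- The number of vertices outside `X` having a neighbour in `X`. -/
noncomputable def ncut (X : Set G.V) : ℕ :=
  Nat.card {v : G.V // v ∉ X ∧ ∃ x ∈ X, ∃ e : G.E, G.ends e = s(v, x)}

/-- Treewidth, via its layout characterization: the minimum over layouts of the
maximum of `|N_G(C_G(S_i, x_i))|`. -/
noncomputable def twl : ℕ :=
  sInf {k | ∃ L : Fin (Fintype.card G.V) ≃ G.V,
    ∀ i, G.ncut (G.comp (G.tail L i) (L i)) ≤ k}

/-- The maximum edge-degree of `G`. -/
noncomputable def maxEdeg : ℕ :=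
  sSup {m | ∃ v : G.V, m = G.edeg v}

end FinMGraph

/-- A tree-layout of `G`: a rooted tree (given by a parent function under which every
node eventually reaches the root) together with an injective mapping `τ` of the vertices
of `G` into the nodes such that the endpoints of every edge are mapped to comparable
(ancestor/descendant) nodes. -/
structure TreeLayout (G : FinMGraph) where
  T : Type
  par : T → T
  root : T
  par_root : par root = root
  reaches_root : ∀ t : T, ∃ n : ℕ, par^[n] t = root
  τ : G.V → T
  inj : Function.Injective τ
  comparable : ∀ (e : G.E) (a b : G.V), G.ends e = s(a, b) →
    (∃ n : ℕ, par^[n] (τ a) = τ b) ∨ (∃ n : ℕ, par^[n] (τ b) = τ a)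

/-- The set `X_T(u)` of vertices of `G` mapped to descendants of the node `u`. -/
def TreeLayout.region {G : FinMGraph} (TL : TreeLayout G) (u : TL.T) : Set G.V :=
  {x | ∃ n : ℕ, TL.par^[n] (TL.τ x) = u}

/-- The theta graph `θ k`: two vertices joined by `k` parallel edges. -/
def theta (k : ℕ) : FinMGraph :=
  { V := Fin 2, E := Fin k, ends := fun _ => s((0 : Fin 2), 1),
    loopless := fun _ => by rw [Sym2.mk_isDiag_iff]; decide }

/-- The cycle on `n ≥ 2` vertices. -/
def cyc (n : ℕ) (h : 2 ≤ n) : FinMGraph :=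
  letI : NeZero n := ⟨by omega⟩
  letI : Fact (1 < n) := ⟨h⟩
  { V := ZMod n, E := ZMod n, ends := fun i => s(i, i + 1),
    loopless := fun i => by
      rw [Sym2.mk_isDiag_iff]
      exact fun hh => one_ne_zero (left_eq_add.mp hh) }

/-- The multigraph `Z_n^3`, obtained from the cycle on `n ≥ 2` vertices by doubling
every edge. -/
def Z3 (n : ℕ) (h : 2 ≤ n) : FinMGraph :=
  letI : NeZero n := ⟨by omega⟩
  letI : Fact (1 < n) := ⟨h⟩
  { V := ZMod n, E := ZMod n × Fin 2, ends := fun p => s(p.1, p.1 + 1),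
    loopless := fun p => by
      rw [Sym2.mk_isDiag_iff]
      exact fun hh => one_ne_zero (left_eq_add.mp hh) }


/-!
Fix a layout of cost `k = etw G`. Restricting `G` to the edges of a block only shrinks the
components `C_G(S_i, x_i)` and the edges leaving them, and distinct outside neighbours of a
component use distinct leaving edges, so `tw B ≤ k`.

For the degree of `v = x_i` in the block of `e`, split the block edges at `v` according to whether
their other end lies in `S_i \ {v}`. The edges from `v` into one component `K` of `G[S_i \ {v}]`
all leave the component of the first vertex of `K` in its tail, so there are at most `k` of them.
At most two of these components meet the ends of `e`. A cycle through `e` and an edge from `v`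
into any other component `K` must leave `K` at a vertex different from `v`, hence outside `S_i`;
such exits, one per component, and the remaining edges at `v` all leave `C_G(S_i, v)`. So
(#remaining edges) + (#other components) ≤ k, whence `Δ_e(B) ≤ k² + 2k < (k + 1)²`.
-/

open Finset

lemma exists_entry_exit_of_mem {α : Type*} {W : Set α} (w : ℕ → α) {n p : ℕ}
    (h0 : w 0 ∉ W) (hn : w n ∉ W) (hp : w p ∈ W) (hpn : p ≤ n) :
    ∃ a c, a < c + 1 ∧ c + 1 ≤ n ∧ w a ∉ W ∧ w (a + 1) ∈ W ∧ w c ∈ W ∧ w (c + 1) ∉ W := by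
  have hp0 : p ≠ 0 := by rintro rfl; exact h0 hp
  have hp' : w (p - 1 + 1) ∈ W := by rwa [Nat.sub_add_cancel (by omega)]
  have henter : ∃ t, w (t + 1) ∈ W := ⟨p - 1, hp'⟩
  set a := Nat.find henter
  set c := Nat.findGreatest (w · ∈ W) n
  have hpc : p ≤ c := Nat.le_findGreatest hpn hp
  have hc : w c ∈ W := Nat.findGreatest_spec (P := (w · ∈ W)) hpn hp
  have hcn : c < n := lt_of_le_of_ne (Nat.findGreatest_le n) fun h => hn (h ▸ hc)
  have hap : a ≤ p - 1 := Nat.find_min' henter hp'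
  refine ⟨a, c, by omega, hcn, ?_, Nat.find_spec henter, hc,
    Nat.findGreatest_is_greatest (Nat.lt_succ_self c) hcn⟩
  rcases ha : a with _ | a'
  · exact h0
  · exact Nat.find_min henter (show a' < a by omega)

namespace FinMGraph

variable {G : FinMGraph}

section Components

variable {S T : Set G.V} {u w : G.V}

instance stepIn_symm : Std.Symm (G.stepIn S) where
  symm _ _ := fun ⟨ha, hb, f, hf⟩ => ⟨hb, ha, f, by rw [hf, Sym2.eq_swap]⟩

lemma mem_comp_self (S : Set G.V) (u : G.V) : u ∈ G.comp S u :=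
  Relation.ReflTransGen.refl

lemma comp_subset (hu : u ∈ S) : G.comp S u ⊆ S := by
  intro w hw
  induction hw with
  | refl => exact hu
  | tail _ h _ => exact h.2.1

lemma mem_comp_of_stepIn {x y : G.V} (hx : x ∈ G.comp S u) (hxy : G.stepIn S x y) :
    y ∈ G.comp S u :=
  hx.tail hxy

lemma comp_mono (h : S ⊆ T) : G.comp S u ⊆ G.comp T u :=
  fun _ => Relation.ReflTransGen.mono (fun _ _ hab => ⟨h hab.1, h hab.2.1, hab.2.2⟩) _ _

lemma comp_eq_of_mem (h : w ∈ G.comp S u) : G.comp S w = G.comp S u := by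
  ext z
  exact ⟨h.trans, (Std.Symm.symm _ _ h).trans⟩

lemma comp_subset_comp_of_stepIn (hST : S ⊆ T) (h : G.stepIn T w u) :
    G.comp S u ⊆ G.comp T w := by
  rw [← comp_eq_of_mem (mem_comp_of_stepIn (mem_comp_self T w) h)]
  exact comp_mono hST

lemma comp_subset_comp_of_subset (h : G.comp S u ⊆ T) : G.comp S u ⊆ G.comp T u := by
  intro w hw
  induction hw with
  | refl => exact mem_comp_self T u
  | @tail b c hb hbc ih => exact ih.tail ⟨h hb, h (hb.tail hbc), hbc.2.2⟩

lemma card_filter_comp_meets_le {𝒦 : Finset (Set G.V)} (h𝒦 : ∀ K ∈ 𝒦, ∃ x, K = G.comp S x)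
    (A : Finset G.V) : #{K ∈ 𝒦 | ∃ c ∈ A, c ∈ K} ≤ #A := by
  refine card_le_card_of_forall_subsingleton (fun K c => c ∈ K)
    (fun K hK => (mem_filter.mp hK).2) fun c _ K hK K' hK' => ?_
  obtain ⟨hK, hcK⟩ := hK
  obtain ⟨hK', hcK'⟩ := hK'
  obtain ⟨x, rfl⟩ := h𝒦 K (mem_filter.mp hK).1
  obtain ⟨x', rfl⟩ := h𝒦 K' (mem_filter.mp hK').1
  rw [← comp_eq_of_mem hcK, ← comp_eq_of_mem hcK']

end Components

section Cuts

lemma cut_eq_card (X : Set G.V) :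
    G.cut X = #{f | ∃ a b, G.ends f = s(a, b) ∧ a ∈ X ∧ b ∉ X} := by
  rw [cut, Nat.card_eq_fintype_card, Fintype.card_subtype]

lemma card_le_cut {X : Set G.V} {s : Finset G.E}
    (hs : ∀ f ∈ s, ∃ a b, G.ends f = s(a, b) ∧ a ∈ X ∧ b ∉ X) : #s ≤ G.cut X := by
  rw [cut_eq_card]
  exact card_le_card fun f hf => mem_filter.mpr ⟨mem_univ f, hs f hf⟩

lemma ncut_le_cut (X : Set G.V) : G.ncut X ≤ G.cut X := by
  have hedge (w : {w : G.V // w ∉ X ∧ ∃ x ∈ X, ∃ f : G.E, G.ends f = s(w, x)}) :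
      ∃ f : G.E, ∃ x ∈ X, G.ends f = s(w.1, x) := by
    obtain ⟨y, hy, f, hf⟩ := w.2.2
    exact ⟨f, y, hy, hf⟩
  choose edge nbr hnbr hedge using hedge
  refine Nat.card_le_card_of_injective
    (fun w => ⟨edge w, nbr w, w, by rw [hedge, Sym2.eq_swap], hnbr w, w.2.1⟩) fun w w' h => ?_
  have h' : s(w.1, nbr w) = s(w'.1, nbr w') := by
    rw [← hedge, ← hedge, show edge w = edge w' from congrArg Subtype.val h]
  rcases Sym2.eq_iff.mp h' with ⟨h, -⟩ | ⟨h, -⟩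
  · exact Subtype.ext h
  · exact absurd (h ▸ hnbr w') w.2.1

lemma card_add_card_le_cut {S : Set G.V} {v : G.V} (hv : v ∈ S) {B : Finset G.E}
    (hB : ∀ f ∈ B, ∃ y ∉ S, G.ends f = s(v, y)) {𝒦 : Finset (Set G.V)}
    (h𝒦 : ∀ K ∈ 𝒦, K ⊆ G.comp S v ∧ v ∉ K ∧ (∃ x, K = G.comp (S \ {v}) x) ∧
      ∃ g x y, G.ends g = s(x, y) ∧ x ∈ K ∧ y ∉ S) :
    #B + #𝒦 ≤ G.cut (G.comp S v) := by
  set C := G.comp S v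
  have hCS : C ⊆ S := comp_subset hv
  set cutC := ({f | ∃ a b, G.ends f = s(a, b) ∧ a ∈ C ∧ b ∉ C} : Finset G.E)
  have hB' : #B ≤ #{f ∈ cutC | v ∈ G.ends f} := by
    refine card_le_card fun f hf => ?_
    obtain ⟨y, hy, hf'⟩ := hB f hf
    simp only [cutC, mem_filter, mem_univ, true_and]
    exact ⟨⟨v, y, hf', mem_comp_self S v, fun h => hy (hCS h)⟩, hf' ▸ Sym2.mem_mk_left _ _⟩
  have h𝒦' : #𝒦 ≤ #{f ∈ cutC | v ∉ G.ends f} := by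
    refine card_le_card_of_forall_subsingleton
      (fun K g => ∃ x y, G.ends g = s(x, y) ∧ x ∈ K ∧ y ∉ S) (fun K hK => ?_) ?_
    · obtain ⟨hKC, hvK, -, g, x, y, hg, hx, hy⟩ := h𝒦 K hK
      refine ⟨g, mem_filter.mpr ⟨mem_filter.mpr ⟨mem_univ g, x, y, hg, hKC hx,
        fun h => hy (hCS h)⟩, ?_⟩, x, y, hg, hx, hy⟩
      rw [hg, Sym2.mem_iff]
      rintro (rfl | rfl)
      exacts [hvK hx, hy hv]
    · rintro g - K ⟨hK, x, y, hg, hx, hy⟩ K' ⟨hK', x', y', hg', hx', hy'⟩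
      obtain ⟨hKC, -, ⟨z, rfl⟩, -⟩ := h𝒦 K hK
      obtain ⟨hKC', -, ⟨z', rfl⟩, -⟩ := h𝒦 K' hK'
      rcases Sym2.eq_iff.mp (hg.symm.trans hg') with ⟨rfl, -⟩ | ⟨rfl, -⟩
      · rw [← comp_eq_of_mem hx, ← comp_eq_of_mem hx']
      · exact absurd (hCS (hKC hx)) hy'
  rw [cut_eq_card, ← card_filter_add_card_filter_not (s := cutC) (v ∈ G.ends ·)]
  exact add_le_add hB' h𝒦'

end Cuts

noncomputable def otherEnd (v : G.V) (f : G.E) : G.V :=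
  if h : v ∈ G.ends f then Sym2.Mem.other h else v

lemma ends_eq_otherEnd {v : G.V} {f : G.E} (h : v ∈ G.ends f) :
    G.ends f = s(v, G.otherEnd v f) := by
  rw [otherEnd, dif_pos h, Sym2.other_spec]

lemma otherEnd_ne {v : G.V} {f : G.E} (h : v ∈ G.ends f) : G.otherEnd v f ≠ v := by
  rw [otherEnd, dif_pos h]
  exact Sym2.other_ne (G.loopless f) h

section Blocks

lemma comp_restrictE_subset (F : Set G.E) (S : Set G.V) (u : G.V) :
    (G.restrictE F).comp S u ⊆ G.comp S u :=
  fun _ => Relation.ReflTransGen.mono (fun _ _ ⟨ha, hb, f, hf⟩ => ⟨ha, hb, f.1, hf⟩) _ _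

lemma cut_restrictE_comp_le (F : Set G.E) {S : Set G.V} {u : G.V} (hu : u ∈ S) :
    (G.restrictE F).cut ((G.restrictE F).comp S u) ≤ G.cut (G.comp S u) := by
  refine Nat.card_le_card_of_injective (fun f => ⟨f.1.1, ?_⟩) fun f f' h =>
    Subtype.ext <| Subtype.ext <| by simpa using h
  obtain ⟨a, b, hf, ha, hb⟩ := f.2
  have hbS : b ∉ S := fun hbS =>
    hb (mem_comp_of_stepIn ha ⟨comp_subset (G := G.restrictE F) hu ha, hbS, f.1, hf⟩)
  exact ⟨a, b, hf, comp_restrictE_subset F S u ha, fun hb' => hbS (comp_subset hu hb')⟩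

lemma IsCycleOn.exists_edge_leaving {m : ℕ} {vs : ZMod m → G.V} {fs : ZMod m → G.E}
    (hcyc : G.IsCycleOn m vs fs) {W : Set G.V} {p q : ZMod m}
    (hp : vs p ∈ W) (hq : vs q ∉ W) (hq' : vs (q + 1) ∉ W) (z : G.V) :
    ∃ g x y, G.ends g = s(x, y) ∧ x ∈ W ∧ y ∉ W ∧ y ≠ z := by
  obtain ⟨hm, hinj, -, hends⟩ := hcyc
  have : NeZero m := ⟨by omega⟩
  -- walk around the cycle from `q + 1` to `q`, avoiding the edge `fs q`: it enters and
  -- leaves `W` at two different outside vertices, and one of them is not `z`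
  set w : ℕ → G.V := fun t => vs (q + 1 + t)
  have hstep (t : ℕ) : G.ends (fs (q + 1 + t)) = s(w t, w (t + 1)) := by
    simp only [hends, w, Nat.cast_succ, add_assoc]
  have hw_inj {s t : ℕ} (hs : s < m) (ht : t < m) (h : w s = w t) : s = t := by
    have := (ZMod.natCast_eq_natCast_iff' s t m).mp (add_left_cancel (hinj h))
    rwa [Nat.mod_eq_of_lt hs, Nat.mod_eq_of_lt ht] at this
  have hlast : w (m - 1) = vs q := by
    simp only [w, Nat.cast_sub (by omega : 1 ≤ m), ZMod.natCast_self, Nat.cast_one]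
    ring_nf
  have hpw : w (p - q - 1).val = vs p := by
    simp only [w, ZMod.natCast_val, ZMod.cast_id]
    ring_nf
  obtain ⟨a, c, hac, hcm, ha, ha1, hc, hc1⟩ := exists_entry_exit_of_mem w (W := W) (n := m - 1)
    (by simpa [w] using hq') (hlast ▸ hq) (hpw ▸ hp)
    (by have := ZMod.val_lt (p - q - 1); omega)
  by_cases haz : w a = z
  · refine ⟨fs (q + 1 + c), w c, w (c + 1), hstep c, hc, hc1, fun h => ?_⟩
    have := hw_inj (by omega) (by omega) (h.trans haz.symm)
    omega
  · exact ⟨fs (q + 1 + a), w (a + 1), w a, by rw [hstep, Sym2.eq_swap], ha1, ha, haz⟩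

lemma exists_edge_leaving_comp_of_sameBlock {S : Set G.V} {e f : G.E} (hef : G.SameBlock e f)
    {u : G.V} (hu : u ∈ G.ends f) (huS : u ∈ S) (he : ∀ c ∈ G.ends e, c ∉ G.comp S u)
    (z : G.V) : ∃ g x y, G.ends g = s(x, y) ∧ x ∈ G.comp S u ∧ y ∉ S ∧ y ≠ z := by
  rcases hef with rfl | ⟨m, vs, fs, hcyc, ⟨q, rfl⟩, ⟨p, rfl⟩⟩
  · exact absurd (mem_comp_self S u) (he u hu)
  obtain ⟨p', rfl⟩ : ∃ p', vs p' = u := by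
    rcases Sym2.mem_iff.mp (hcyc.2.2.2 p ▸ hu) with rfl | rfl
    exacts [⟨p, rfl⟩, ⟨p + 1, rfl⟩]
  have hq := hcyc.2.2.2 q
  obtain ⟨g, x, y, hg, hx, hy, hyz⟩ := hcyc.exists_edge_leaving (mem_comp_self S (vs p'))
    (he _ (hq ▸ Sym2.mem_mk_left _ _)) (he _ (hq ▸ Sym2.mem_mk_right _ _)) z
  exact ⟨g, x, y, hg, hx, fun hyS => hy (mem_comp_of_stepIn hx ⟨comp_subset huS hx, hyS, g, hg⟩),
    hyz⟩

lemma card_add_card_comps_avoiding_le_cut (e : G.E) {S : Set G.V} {v : G.V} (hv : v ∈ S)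
    {D : Finset G.E} (hD : ∀ f ∈ D, G.SameBlock e f ∧ v ∈ G.ends f) :
    #{f ∈ D | G.otherEnd v f ∉ S \ {v}} +
      #{K ∈ {f ∈ D | G.otherEnd v f ∈ S \ {v}}.image (G.comp (S \ {v}) <| G.otherEnd v ·) |
        ¬ ∃ c ∈ (G.ends e).toFinset, c ∈ K} ≤ G.cut (G.comp S v) := by
  refine card_add_card_le_cut hv (fun f hf => ?_) (fun K hK => ?_)
  · obtain ⟨hfD, hf'⟩ := mem_filter.mp hf
    have hvf := (hD f hfD).2
    exact ⟨G.otherEnd v f, fun h => hf' ⟨h, otherEnd_ne hvf⟩, ends_eq_otherEnd hvf⟩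
  · obtain ⟨hK, hKe⟩ := mem_filter.mp hK
    obtain ⟨f, hf, rfl⟩ := mem_image.mp hK
    obtain ⟨hfD, hfS'⟩ := mem_filter.mp hf
    obtain ⟨hef, hvf⟩ := hD f hfD
    obtain ⟨g, x, y, hg, hx, hy, hyv⟩ := exists_edge_leaving_comp_of_sameBlock hef
      (ends_eq_otherEnd hvf ▸ Sym2.mem_mk_right _ _) hfS'
      (fun c hc hcK => hKe ⟨c, Sym2.mem_toFinset.mpr hc, hcK⟩) v
    exact ⟨comp_subset_comp_of_stepIn Set.sdiff_subset ⟨hv, hfS'.1, f, ends_eq_otherEnd hvf⟩,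
      fun h => (comp_subset hfS' h).2 rfl, ⟨_, rfl⟩, g, x, y, hg, hx, fun h => hy ⟨h, hyv⟩⟩

lemma edeg_blockOf (e : G.E) (v : G.V) :
    (G.blockOf e).edeg v = #{f | G.SameBlock e f ∧ v ∈ G.ends f} := by
  change Nat.card {f : {f // G.SameBlock e f} // v ∈ G.ends f.1} = _
  rw [Nat.card_congr (Equiv.subtypeSubtypeEquivSubtypeInter (G.SameBlock e) (v ∈ G.ends ·)),
    Nat.card_eq_fintype_card, Fintype.card_subtype]

end Blocks

section Layout

variable {L : Fin (Fintype.card G.V) ≃ G.V} {k : ℕ}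

lemma exists_cost_le_etw (G : FinMGraph) :
    ∃ L : Fin (Fintype.card G.V) ≃ G.V, ∀ i, G.cost L i ≤ G.etw :=
  Nat.sInf_mem (s := {k | ∃ L, ∀ i, G.cost L i ≤ k})
    ⟨univ.sup (G.cost (Fintype.equivFin G.V).symm), (Fintype.equivFin G.V).symm,
      fun i => le_sup (mem_univ i)⟩

lemma mem_tail_self (L : Fin (Fintype.card G.V) ≃ G.V) (i : Fin (Fintype.card G.V)) :
    L i ∈ G.tail L i :=
  (L.symm_apply_apply i).ge

lemma twl_restrictE_le (hL : ∀ i, G.cost L i ≤ k) (F : Set G.E) : (G.restrictE F).twl ≤ k :=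
  Nat.sInf_le ⟨L, fun i => (ncut_le_cut _).trans <|
    (cut_restrictE_comp_le F (mem_tail_self L i)).trans (hL i)⟩

/-- `L j` is the first vertex of the component in the layout. -/
lemma exists_comp_subset_comp_tail (L : Fin (Fintype.card G.V) ≃ G.V) (S : Set G.V) (u : G.V) :
    ∃ j, L j ∈ G.comp S u ∧ G.comp S u ⊆ G.comp (G.tail L j) (L j) := by
  obtain ⟨w, hw, hmin⟩ := exists_min_image {w | w ∈ G.comp S u} L.symm
    ⟨u, mem_filter.mpr ⟨mem_univ u, mem_comp_self S u⟩⟩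
  rw [mem_filter] at hw
  refine ⟨L.symm w, by simpa using hw.2, ?_⟩
  rw [L.apply_symm_apply, ← comp_eq_of_mem hw.2]
  exact comp_subset_comp_of_subset fun x hx =>
    hmin x (mem_filter.mpr ⟨mem_univ x, (comp_eq_of_mem hw.2) ▸ hx⟩)

lemma card_le_of_forall_ends_eq_comp (hL : ∀ j, G.cost L j ≤ k) {i : Fin (Fintype.card G.V)}
    {w : G.V} (hw : w ∈ G.tail L i \ {L i}) {s : Finset G.E}
    (hs : ∀ f ∈ s, ∃ x ∈ G.comp (G.tail L i \ {L i}) w, G.ends f = s(x, L i)) : #s ≤ k := by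
  obtain ⟨j, hj, hsub⟩ := exists_comp_subset_comp_tail L (G.tail L i \ {L i}) w
  obtain ⟨hij, hji⟩ := comp_subset hw hj
  have hlt : i < j := lt_of_le_of_ne (by simpa [tail] using hij) fun h => hji (h ▸ rfl)
  have hvC : L i ∉ G.comp (G.tail L j) (L j) := fun h =>
    absurd (comp_subset (mem_tail_self L j) h) (by simpa [tail] using hlt)
  refine (card_le_cut fun f hf => ?_).trans (hL j)
  obtain ⟨x, hx, hf⟩ := hs f hf
  exact ⟨x, L i, hf, hsub hx, hvC⟩

lemma card_le_mul_card_image_comp (hL : ∀ j, G.cost L j ≤ k) {i : Fin (Fintype.card G.V)}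
    {s : Finset G.E}
    (hs : ∀ f ∈ s, L i ∈ G.ends f ∧ G.otherEnd (L i) f ∈ G.tail L i \ {L i}) :
    #s ≤ k * #(s.image fun f => G.comp (G.tail L i \ {L i}) (G.otherEnd (L i) f)) := by
  refine card_le_mul_card_image s k fun K hK => ?_
  obtain ⟨f₀, hf₀, rfl⟩ := mem_image.mp hK
  refine card_le_of_forall_ends_eq_comp hL (hs f₀ hf₀).2 fun f hf => ?_
  obtain ⟨hf, hff₀⟩ := mem_filter.mp hf
  exact ⟨_, hff₀ ▸ mem_comp_self _ _, by rw [ends_eq_otherEnd (hs f hf).1, Sym2.eq_swap]⟩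

lemma card_sameBlock_edges_at_le (hL : ∀ j, G.cost L j ≤ k) (e : G.E)
    (i : Fin (Fintype.card G.V)) :
    #{f | G.SameBlock e f ∧ L i ∈ G.ends f} ≤ k * k + 2 * k := by
  set v := L i
  set S := G.tail L i
  set S' := S \ {v}
  set D : Finset G.E := {f | G.SameBlock e f ∧ v ∈ G.ends f}
  set Fwd := {f ∈ D | G.otherEnd v f ∈ S'}
  set Bwd := {f ∈ D | G.otherEnd v f ∉ S'}
  set 𝒦 := Fwd.image fun f => G.comp S' (G.otherEnd v f)
  set T := (G.ends e).toFinset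
  have hv : v ∈ S := mem_tail_self L i
  have hD : ∀ f ∈ D, G.SameBlock e f ∧ v ∈ G.ends f := fun f hf => (mem_filter.mp hf).2
  have hFwd : #Fwd ≤ k * #𝒦 := card_le_mul_card_image_comp hL fun f hf =>
    ⟨(hD f (mem_filter.mp hf).1).2, (mem_filter.mp hf).2⟩
  have hmeet : #{K ∈ 𝒦 | ∃ c ∈ T, c ∈ K} ≤ 2 := by
    refine (card_filter_comp_meets_le (S := S') (fun K hK => ?_) T).trans
      (Sym2.card_toFinset_of_not_isDiag _ (G.loopless e)).le
    obtain ⟨f, -, rfl⟩ := mem_image.mp hK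
    exact ⟨_, rfl⟩
  have hcut : #Bwd + #{K ∈ 𝒦 | ¬ ∃ c ∈ T, c ∈ K} ≤ k :=
    (card_add_card_comps_avoiding_le_cut e hv hD).trans (hL i)
  have hD_split := card_filter_add_card_filter_not (s := D) (G.otherEnd v · ∈ S')
  have h𝒦_split := card_filter_add_card_filter_not (s := 𝒦) (∃ c ∈ T, c ∈ ·)
  have hBwd : #Bwd + k * #{K ∈ 𝒦 | ¬ ∃ c ∈ T, c ∈ K} ≤ k * k := by
    rcases Nat.eq_zero_or_pos k with rfl | hk
    · omega
    · nlinarith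
  nlinarith

lemma maxEdeg_blockOf_le (hL : ∀ j, G.cost L j ≤ k) (e : G.E) :
    (G.blockOf e).maxEdeg ≤ k * k + 2 * k := by
  refine csSup_le' ?_
  rintro m ⟨v, rfl⟩
  rw [edeg_blockOf e (v : G.V), ← L.apply_symm_apply v]
  exact card_sameBlock_edges_at_le hL e (L.symm v)

end Layout

end FinMGraph

/-- For every graph `G`, `√(p(G)) ≤ etw(G)`, where
`p(G) = max over blocks B of G of max(Δ_e(B), tw(B))`. -/
theorem sqrt_blockParam_le_etw (G : FinMGraph) :
    Nat.sqrt (sSup {m | ∃ e : G.E, m = max (G.blockOf e).maxEdeg (G.blockOf e).twl}) ≤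
      G.etw := by
  obtain ⟨L, hL⟩ := G.exists_cost_le_etw
  set k := G.etw
  have hp : sSup {m | ∃ e : G.E, m = max (G.blockOf e).maxEdeg (G.blockOf e).twl} ≤
      k * k + 2 * k := by
    refine csSup_le' ?_
    rintro m ⟨e, rfl⟩
    exact max_le (FinMGraph.maxEdeg_blockOf_le hL e)
      ((FinMGraph.twl_restrictE_le hL _).trans (by nlinarith))
  exact Nat.lt_succ_iff.mp <| (Nat.sqrt_le_sqrt hp).trans_lt <| Nat.sqrt_lt'.mpr (by nlinarith)
end

section
/- The edge-treewidth of the multigraph Z_n^3 obtained from the n-cycle C_n (n ≥ 2) by doubling every edge equals 4. -/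
open Classical

/-!
Every vertex of `Z_n^3` meets four edges, and in any layout the last vertex is a component on
its own, so its cost is 4. Conversely, in the layout `0, 1, …, n - 1` every suffix is an arc of
the cycle: it is connected, hence its own component, and only the two doubled edges at its ends
leave it, so every cost is at most 4.
-/

theorem Sym2.exists_mk_eq_mem_notMem_iff_xor {α : Type*} {X : Set α} {u w : α} :
    (∃ a b, s(u, w) = s(a, b) ∧ a ∈ X ∧ b ∉ X) ↔ Xor (u ∈ X) (w ∈ X) := by
  constructor
  · rintro ⟨a, b, hab, ha, hb⟩
    rcases Sym2.eq_iff.mp hab with ⟨rfl, rfl⟩ | ⟨rfl, rfl⟩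
    · exact Or.inl ⟨ha, hb⟩
    · exact Or.inr ⟨ha, hb⟩
  · rintro (⟨hu, hw⟩ | ⟨hw, hu⟩)
    · exact ⟨u, w, rfl, hu, hw⟩
    · exact ⟨w, u, Sym2.eq_swap, hw, hu⟩

namespace FinMGraph

variable (G : FinMGraph)

theorem cut_le_card_E (X : Set G.V) : G.cut X ≤ Fintype.card G.E := by
  rw [← Nat.card_eq_fintype_card]
  exact Nat.card_le_card_of_injective _ Subtype.val_injective

theorem comp_subset_s14 {S : Set G.V} {v : G.V} (hv : v ∈ S) : G.comp S v ⊆ S := by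
  intro w hw
  induction hw with
  | refl => exact hv
  | tail _ hstep => exact hstep.2.1

theorem comp_singleton (v : G.V) : G.comp {v} v = {v} :=
  (G.comp_subset_s14 (Set.mem_singleton v)).antisymm
    (Set.singleton_subset_iff.mpr Relation.ReflTransGen.refl)

theorem tail_eq_singleton_of_last (L : Fin (Fintype.card G.V) ≃ G.V)
    (i : Fin (Fintype.card G.V)) (hi : (i : ℕ) + 1 = Fintype.card G.V) :
    G.tail L i = {L i} := by
  ext v
  refine ⟨fun hv => ?_, fun hv => ?_⟩
  · have : L.symm v = i := Fin.ext (le_antisymm (by omega) hv)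
    rw [Set.mem_singleton_iff, ← this, L.apply_symm_apply]
  · rw [Set.mem_singleton_iff.mp hv]
    exact (L.symm_apply_apply i).ge

def IsPathLayout (L : Fin (Fintype.card G.V) ≃ G.V) : Prop :=
  ∀ j k : Fin (Fintype.card G.V), (k : ℕ) = j + 1 → ∃ e, G.ends e = s(L j, L k)

theorem comp_tail_of_isPathLayout {L : Fin (Fintype.card G.V) ≃ G.V} (hL : G.IsPathLayout L)
    (i : Fin (Fintype.card G.V)) :
    G.comp (G.tail L i) (L i) = G.tail L i := by
  refine (G.comp_subset_s14 (show i ≤ L.symm (L i) by simp)).antisymm fun w hw => ?_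
  have reach : ∀ m : ℕ, ∀ k : Fin (Fintype.card G.V), (k : ℕ) = i + m →
      Relation.ReflTransGen (G.stepIn (G.tail L i)) (L i) (L k) := by
    intro m
    induction m with
    | zero => intro k hk; rw [Fin.ext hk]
    | succ m ih =>
      intro k hk
      let j : Fin (Fintype.card G.V) := ⟨i + m, by omega⟩
      obtain ⟨e, he⟩ := hL j k (by simp [j, hk, Nat.add_assoc])
      refine (ih j rfl).tail ⟨?_, ?_, e, he⟩
      · show i ≤ L.symm (L j)
        simp [Fin.le_def, j]
      · show i ≤ L.symm (L k)
        simp [Fin.le_def, hk]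
  have hi : (i : ℕ) ≤ L.symm w := hw
  have := reach (L.symm w - i) (L.symm w) (by omega)
  rwa [L.apply_symm_apply] at this

theorem cost_eq_cut_tail_of_isPathLayout {L : Fin (Fintype.card G.V) ≃ G.V}
    (hL : G.IsPathLayout L) (i : Fin (Fintype.card G.V)) :
    G.cost L i = G.cut (G.tail L i) := by
  rw [cost, G.comp_tail_of_isPathLayout hL]

theorem etw_le {k : ℕ} (L : Fin (Fintype.card G.V) ≃ G.V) (hL : ∀ i, G.cost L i ≤ k) :
    G.etw ≤ k :=
  Nat.sInf_le ⟨L, hL⟩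

theorem exists_layout_cost_le_etw :
    ∃ L : Fin (Fintype.card G.V) ≃ G.V, ∀ i, G.cost L i ≤ G.etw := by
  have hne : {k | ∃ L : Fin (Fintype.card G.V) ≃ G.V, ∀ i, G.cost L i ≤ k}.Nonempty :=
    ⟨Fintype.card G.E, (Fintype.equivFin G.V).symm, fun _ => G.cut_le_card_E _⟩
  exact Nat.sInf_mem hne

theorem le_etw_of_le_cut_singleton [Nonempty G.V] {k : ℕ} (hk : ∀ v, k ≤ G.cut {v}) :
    k ≤ G.etw := by
  obtain ⟨L, hL⟩ := G.exists_layout_cost_le_etw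
  have hpos : 0 < Fintype.card G.V := Fintype.card_pos
  let last : Fin (Fintype.card G.V) := ⟨Fintype.card G.V - 1, by omega⟩
  have hcost : G.cost L last = G.cut {L last} := by
    rw [cost, G.tail_eq_singleton_of_last L last (by simp [last]; omega), comp_singleton]
  exact (hk _).trans (hcost ▸ hL last)

end FinMGraph

theorem ZMod.setOf_xor_le_val_subset {n : ℕ} [Fact (1 < n)] (i : ℕ) :
    {x : ZMod n | Xor (i ≤ x.val) (i ≤ (x + 1).val)} ⊆ {(i : ZMod n) - 1, -1} := by
  intro x (hx : Xor (i ≤ x.val) (i ≤ (x + 1).val))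
  have hxval : ((x.val : ℕ) : ZMod n) = x := ZMod.natCast_zmod_val x
  by_cases hlt : x.val + 1 < n
  · have hsucc : (x + 1).val = x.val + 1 := by
      rw [ZMod.val_add_of_lt (by rwa [ZMod.val_one]), ZMod.val_one]
    have hi : i = x.val + 1 := by rw [xor_def, hsucc] at hx; omega
    left
    rw [hi, Nat.cast_succ, hxval, add_sub_cancel_right]
  · have hn : x.val + 1 = n := by have := x.val_lt; omega
    right
    rw [Set.mem_singleton_iff, eq_neg_iff_add_eq_zero, ← hxval, ← Nat.cast_add_one, hn,
      ZMod.natCast_self]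

namespace Z3

variable {n : ℕ} (h : 2 ≤ n)

theorem cut_eq (X : Set (ZMod n)) :
    (Z3 n h).cut X = 2 * {x : ZMod n | Xor (x ∈ X) (x + 1 ∈ X)}.ncard := by
  have hcross : ∀ p : ZMod n × Fin 2,
      (∃ a b, s(p.1, p.1 + 1) = s(a, b) ∧ a ∈ X ∧ b ∉ X) ↔ Xor (p.1 ∈ X) (p.1 + 1 ∈ X) :=
    fun _ => Sym2.exists_mk_eq_mem_notMem_iff_xor
  change Nat.card {e : ZMod n × Fin 2 // ∃ a b, s(e.1, e.1 + 1) = s(a, b) ∧ a ∈ X ∧ b ∉ X} = _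
  rw [Nat.card_congr ((Equiv.subtypeEquivRight hcross).trans
    (Equiv.prodSubtypeFstEquivSubtypeProd (p := fun x : ZMod n => Xor (x ∈ X) (x + 1 ∈ X)))),
    Nat.card_prod, Nat.card_fin, mul_comm]
  rfl

theorem cut_singleton (v : ZMod n) : (Z3 n h).cut {v} = 4 := by
  have : Fact (1 < n) := ⟨h⟩
  have hv : v ≠ v - 1 := fun hh => one_ne_zero (sub_eq_self.mp hh.symm)
  have hboundary : {x : ZMod n | Xor (x ∈ ({v} : Set (ZMod n))) (x + 1 ∈ ({v} : Set (ZMod n)))}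
      = {v, v - 1} := by
    ext x
    simp only [Set.mem_ofPred_eq, Set.mem_singleton_iff, Set.mem_insert_iff, xor_def,
      ← eq_sub_iff_add_eq]
    grind
  refine (cut_eq h {v}).trans ?_
  rw [hboundary, Set.ncard_pair hv]

def natLayout : Fin (Fintype.card (Z3 n h).V) ≃ (Z3 n h).V :=
  haveI : NeZero n := ⟨by omega⟩
  { toFun := fun i => ((i : ℕ) : ZMod n)
    invFun := fun v => ⟨(v : ZMod n).val, lt_of_lt_of_eq (ZMod.val_lt v) (ZMod.card n).symm⟩
    left_inv := fun i => Fin.ext (ZMod.val_cast_of_lt (lt_of_lt_of_eq i.isLt (ZMod.card n)))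
    right_inv := ZMod.natCast_zmod_val }

theorem mem_tail_natLayout (i : Fin (Fintype.card (Z3 n h).V)) (v : ZMod n) :
    v ∈ (Z3 n h).tail (natLayout h) i ↔ (i : ℕ) ≤ v.val :=
  Fin.le_def

theorem isPathLayout_natLayout : (Z3 n h).IsPathLayout (natLayout h) := by
  intro j k hk
  refine ⟨((j : ℕ), 0), ?_⟩
  change s(((j : ℕ) : ZMod n), ((j : ℕ) : ZMod n) + 1) = s(((j : ℕ) : ZMod n), ((k : ℕ) : ZMod n))
  rw [hk, Nat.cast_succ]

theorem cut_tail_natLayout_le (i : Fin (Fintype.card (Z3 n h).V)) :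
    (Z3 n h).cut ((Z3 n h).tail (natLayout h) i) ≤ 4 := by
  have : Fact (1 < n) := ⟨h⟩
  refine (cut_eq h _).trans_le ?_
  calc 2 * {x : ZMod n | Xor (x ∈ (Z3 n h).tail (natLayout h) i)
          (x + 1 ∈ (Z3 n h).tail (natLayout h) i)}.ncard
      ≤ 2 * ({((i : ℕ) : ZMod n) - 1, -1} : Set (ZMod n)).ncard := by
        gcongr
        · exact Set.toFinite _
        · simpa only [mem_tail_natLayout] using ZMod.setOf_xor_le_val_subset i
    _ ≤ 2 * 2 := by
        gcongr
        exact (Set.ncard_insert_le _ _).trans (by rw [Set.ncard_singleton])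

end Z3

/-- The edge-treewidth of the multigraph `Z_n^3` obtained from the `n`-cycle
(`n ≥ 2`) by doubling every edge equals 4. -/
theorem etw_Z3 (n : ℕ) (h : 2 ≤ n) : (Z3 n h).etw = 4 := by
  refine le_antisymm ((Z3 n h).etw_le (Z3.natLayout h) fun i => ?_) ?_
  · rw [(Z3 n h).cost_eq_cut_tail_of_isPathLayout (Z3.isPathLayout_natLayout h)]
    exact Z3.cut_tail_natLayout_le h i
  · have : Nonempty (Z3 n h).V := ⟨(0 : ZMod n)⟩
    exact (Z3 n h).le_etw_of_le_cut_singleton fun v => (Z3.cut_singleton h v).ge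
end
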